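/- arXiv:1802.08673 — 4 statements merged into one kernel-verified Lean document; each statement's English description precedes it below -/
import Mathlib

section
/- Let p, q : ℕ → ℝ be nonnegative summable sequences with entries in [0,1], and let Q : ℕ → ℕ → ℝ be a doubly stochastic infinite matrix, i.e., Q i k ≥ 0 for all i, k, ∑_{k∈ℕ} Q i k = 1 for every i, and ∑_{i∈ℕ} Q i k = 1 for every k. Suppose q i = ∑_{k∈ℕ} Q i k · p k for every i. Then for every convex function φ : ℝ → ℝ on [0,1] with φ(0) = 0, assuming φ ∘ p and φ ∘ q are summable, ∑_{i∈ℕ} φ(q i) ≤ ∑_{k∈ℕ} φ(p k). -/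
/-!
Row by row, `q i` is a weighted mean of the `p k` with weights `Q i ·`, so the countable Jensen
inequality gives `φ (q i) ≤ ∑' k, Q i k * φ (p k)`. Since the columns of `Q` sum to `1`, the
double series `∑ Q i k * φ (p k)` converges absolutely; summing over `i` and exchanging the order
of summation leaves `∑' k, φ (p k)`.

Countable Jensen follows from a supporting line of `φ` at the mean, which exists at interior
points of the interval. If the mean is an endpoint, every point carrying positive weight equals it.
-/

open Set

variable {ι κ : Type*}

lemma summable_of_tsum_ne_zero {f : ι → ℝ} (h : ∑' i, f i ≠ 0) : Summable f :=
  by_contra fun hf => h (tsum_eq_zero_of_not_summable hf)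

lemma ConvexOn.add_rightDeriv_mul_sub_le {S : Set ℝ} {f : ℝ → ℝ} (hf : ConvexOn ℝ S f)
    {m x : ℝ} (hm : m ∈ interior S) (hx : x ∈ S) :
    f m + derivWithin f (Ioi m) m * (x - m) ≤ f x := by
  rcases lt_trichotomy x m with hxm | rfl | hmx
  · have hslope : slope f x m ≤ derivWithin f (Ioi m) m :=
      (hf.slope_le_leftDeriv_of_mem_interior hx hm hxm).trans
        (hf.leftDeriv_le_rightDeriv_of_mem_interior hm)
    rw [slope_def_field, div_le_iff₀ (sub_pos.2 hxm)] at hslope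
    linarith
  · simp
  · have hslope : derivWithin f (Ioi m) m ≤ slope f m x :=
      hf.rightDeriv_le_slope_of_mem_interior hm hx hmx
    rw [slope_def_field, le_div_iff₀ (sub_pos.2 hmx)] at hslope
    linarith

lemma ConvexOn.map_le_tsum_of_mem_interior {S : Set ℝ} {f : ℝ → ℝ} (hf : ConvexOn ℝ S f)
    {w x : ι → ℝ} {m : ℝ} (hm : m ∈ interior S) (hx : ∀ i, x i ∈ S) (hw : ∀ i, 0 ≤ w i)
    (hw1 : HasSum w 1) (hdev : HasSum (fun i => w i * (x i - m)) 0)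
    (hfx : Summable fun i => w i * f (x i)) :
    f m ≤ ∑' i, w i * f (x i) := by
  set c := derivWithin f (Ioi m) m
  have hline : HasSum (fun i => w i * f m + c * (w i * (x i - m))) (f m) := by
    simpa using (hw1.mul_right (f m)).add (hdev.mul_left c)
  refine hasSum_le (fun i => ?_) hline hfx.hasSum
  have hsupport := hf.add_rightDeriv_mul_sub_le hm (hx i)
  linarith [mul_le_mul_of_nonneg_left hsupport (hw i)]

lemma tsum_mul_map_eq_of_hasSum_mul_sub_eq_zero (f : ℝ → ℝ) {w x : ι → ℝ} {m : ℝ}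
    (hw1 : ∑' i, w i = 1) (hdev : HasSum (fun i => w i * (x i - m)) 0)
    (hsign : (∀ i, 0 ≤ w i * (x i - m)) ∨ ∀ i, w i * (x i - m) ≤ 0) :
    ∑' i, w i * f (x i) = f m := by
  have hzero : ∀ i, w i * (x i - m) = 0 := by
    rcases hsign with hnonneg | hnonpos
    · exact congrFun ((hasSum_zero_iff_of_nonneg hnonneg).1 hdev)
    · have hneg := (hasSum_zero_iff_of_nonneg fun i => neg_nonneg.2 (hnonpos i)).1
        (by simpa using hdev.neg)
      exact fun i => neg_eq_zero.1 (congrFun hneg i)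
  have hpoint : ∀ i, w i * f (x i) = w i * f m := fun i => by
    rcases mul_eq_zero.1 (hzero i) with hw | hx
    · rw [hw, zero_mul, zero_mul]
    · rw [sub_eq_zero.1 hx]
  rw [tsum_congr hpoint, tsum_mul_right, hw1, one_mul]

theorem ConvexOn.map_tsum_le {f : ℝ → ℝ} {a b : ℝ} (hf : ConvexOn ℝ (Icc a b) f)
    {w x : ι → ℝ} (hw : ∀ i, 0 ≤ w i) (hw1 : ∑' i, w i = 1) (hx : ∀ i, x i ∈ Icc a b)
    (hfx : Summable fun i => w i * f (x i)) :
    f (∑' i, w i * x i) ≤ ∑' i, w i * f (x i) := by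
  have hws : Summable w := summable_of_tsum_ne_zero (by simp [hw1])
  have hwx : Summable fun i => w i * x i :=
    (hws.mul_right (max |a| |b|)).of_norm_bounded fun i => by
      rw [Real.norm_eq_abs, abs_mul, abs_of_nonneg (hw i)]
      exact mul_le_mul_of_nonneg_left (abs_le_max_abs_abs (hx i).1 (hx i).2) (hw i)
  set m := ∑' i, w i * x i
  have hm : m ∈ Icc a b := by
    constructor
    · simpa [tsum_mul_right, hw1] using
        (hws.mul_right a).tsum_le_tsum (fun i => mul_le_mul_of_nonneg_left (hx i).1 (hw i)) hwx
    · simpa [tsum_mul_right, hw1] using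
        hwx.tsum_le_tsum (fun i => mul_le_mul_of_nonneg_left (hx i).2 (hw i)) (hws.mul_right b)
  have hdev : HasSum (fun i => w i * (x i - m)) 0 := by
    have h := hwx.hasSum.sub (hws.hasSum.mul_right m)
    rw [hw1, one_mul, sub_self] at h
    simpa only [mul_sub] using h
  rcases hm.1.eq_or_lt with ham | ham
  · refine (tsum_mul_map_eq_of_hasSum_mul_sub_eq_zero f hw1 hdev (.inl fun i => ?_)).ge
    exact mul_nonneg (hw i) (sub_nonneg.2 (ham ▸ (hx i).1))
  rcases hm.2.eq_or_lt with hmb | hmb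
  · refine (tsum_mul_map_eq_of_hasSum_mul_sub_eq_zero f hw1 hdev (.inr fun i => ?_)).ge
    exact mul_nonpos_of_nonneg_of_nonpos (hw i) (sub_nonpos.2 (hmb ▸ (hx i).2))
  have hmint : m ∈ interior (Icc a b) := by rw [interior_Icc]; exact ⟨ham, hmb⟩
  exact hf.map_le_tsum_of_mem_interior hmint hx hw (hw1 ▸ hws.hasSum) hdev hfx

lemma summable_prod_mul_of_tsum_eq_one {Q : ι → κ → ℝ} (hQ : ∀ i k, 0 ≤ Q i k)
    (hcol : ∀ k, ∑' i, Q i k = 1) {g : κ → ℝ} (hg : Summable g) :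
    Summable fun ik : ι × κ => Q ik.1 ik.2 * g ik.2 := by
  have habs : Summable fun ki : κ × ι => Q ki.2 ki.1 * |g ki.1| := by
    have hnonneg : 0 ≤ fun ki : κ × ι => Q ki.2 ki.1 * |g ki.1| := fun _ =>
      mul_nonneg (hQ _ _) (abs_nonneg _)
    rw [summable_prod_of_nonneg hnonneg]
    have hcols (k : κ) : Summable fun i => Q i k :=
      summable_of_tsum_ne_zero (by simp [hcol])
    refine ⟨fun k => (hcols k).mul_right |g k|, ?_⟩
    simpa only [tsum_mul_right, hcol, one_mul] using hg.abs
  refine habs.prod_symm.of_norm_bounded fun ik => ?_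
  rw [Real.norm_eq_abs, abs_mul, abs_of_nonneg (hQ _ _)]
  rfl

theorem tsum_convex_le_of_doublyStochastic_general
    (p q : ℕ → ℝ) (Q : ℕ → ℕ → ℝ) (φ : ℝ → ℝ)
    (hp : ∀ k, p k ∈ Set.Icc (0 : ℝ) 1)
    (hQ : ∀ i k, 0 ≤ Q i k)
    (hrow : ∀ i, ∑' k, Q i k = 1)
    (hcol : ∀ k, ∑' i, Q i k = 1)
    (hqp : ∀ i, q i = ∑' k, Q i k * p k)
    (hφ : ConvexOn ℝ (Set.Icc (0 : ℝ) 1) φ)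
    (hsp : Summable (fun k => φ (p k))) (hsq : Summable (fun i => φ (q i))) :
    ∑' i, φ (q i) ≤ ∑' k, φ (p k) := by
  have hQφ := summable_prod_mul_of_tsum_eq_one hQ hcol hsp
  have hjensen : ∀ i, φ (q i) ≤ ∑' k, Q i k * φ (p k) := fun i =>
    hqp i ▸ hφ.map_tsum_le (hQ i) (hrow i) hp (hQφ.prod_factor i)
  calc ∑' i, φ (q i) ≤ ∑' i, ∑' k, Q i k * φ (p k) := hsq.tsum_le_tsum hjensen hQφ.prod
    _ = ∑' k, ∑' i, Q i k * φ (p k) := (hQφ.tsum_comm (f := fun i k => Q i k * φ (p k))).symm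
    _ = ∑' k, φ (p k) := by simp only [tsum_mul_right, hcol, one_mul]

/-- If `q` is obtained from `p` by an infinite doubly stochastic matrix `Q`, then for every
function `φ` convex on `[0,1]` with `φ 0 = 0` (assuming `φ ∘ p` and `φ ∘ q` summable),
`∑' i, φ (q i) ≤ ∑' k, φ (p k)`. -/
theorem tsum_convex_le_of_doublyStochastic
    (p q : ℕ → ℝ) (Q : ℕ → ℕ → ℝ) (φ : ℝ → ℝ)
    (hp : ∀ k, p k ∈ Set.Icc (0 : ℝ) 1)
    (hq : ∀ i, q i ∈ Set.Icc (0 : ℝ) 1)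
    (hps : Summable p) (hqs : Summable q)
    (hQ : ∀ i k, 0 ≤ Q i k)
    (hrow : ∀ i, ∑' k, Q i k = 1)
    (hcol : ∀ k, ∑' i, Q i k = 1)
    (hqp : ∀ i, q i = ∑' k, Q i k * p k)
    (hφ : ConvexOn ℝ (Set.Icc (0 : ℝ) 1) φ) (hφ0 : φ 0 = 0)
    (hsp : Summable (fun k => φ (p k))) (hsq : Summable (fun i => φ (q i))) :
    ∑' i, φ (q i) ≤ ∑' k, φ (p k) :=
  tsum_convex_le_of_doublyStochastic_general p q Q φ hp hQ hrow hcol hqp hφ hsp hsq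
end

section
/- Let p, q : ℕ → ℝ be nonincreasing nonnegative summable sequences with entries in [0,1] such that q is majorized by p, i.e., ∑_{i=1}^{k} q i ≤ ∑_{i=1}^{k} p i for all k ∈ ℕ and ∑_{i∈ℕ} q i = ∑_{i∈ℕ} p i. Then for every convex function φ : ℝ → ℝ on [0,1] with φ(0) = 0, assuming φ ∘ p and φ ∘ q are summable, ∑_{i∈ℕ} φ(q i) ≤ ∑_{i∈ℕ} φ(p i). -/
open Set Filter

/-- Slope selection: `gsl φ x` is the supremum of slopes of `φ` over `[0, x)`,
a subgradient of `φ` at `x ∈ (0,1)`. -/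
noncomputable def gsl (φ : ℝ → ℝ) (x : ℝ) : ℝ :=
  sSup ((fun y => (φ x - φ y) / (x - y)) '' Set.Ico 0 x)

lemma gsl_subgrad {φ : ℝ → ℝ} (hφ : ConvexOn ℝ (Set.Icc (0:ℝ) 1) φ)
    {x y : ℝ} (hx : x ∈ Set.Ioo (0:ℝ) 1) (hy : y ∈ Set.Icc (0:ℝ) 1) :
    φ x + gsl φ x * (y - x) ≤ φ y := by
  have hx1 : x ∈ Set.Icc (0:ℝ) 1 := ⟨hx.1.le, hx.2.le⟩
  have h1 : (1:ℝ) ∈ Set.Icc (0:ℝ) 1 := ⟨zero_le_one, le_rfl⟩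
  have hne : ((fun y => (φ x - φ y) / (x - y)) '' Set.Ico 0 x).Nonempty :=
    ⟨_, ⟨0, ⟨le_rfl, hx.1⟩, rfl⟩⟩
  have hbdd : BddAbove ((fun y => (φ x - φ y) / (x - y)) '' Set.Ico 0 x) := by
    refine ⟨(φ 1 - φ x) / (1 - x), ?_⟩
    rintro _ ⟨z, hz, rfl⟩
    exact hφ.slope_mono_adjacent ⟨hz.1, hz.2.le.trans hx.2.le⟩ h1 hz.2 hx.2
  rcases lt_trichotomy y x with hlt | heq | hgt
  · have hs : (φ x - φ y) / (x - y) ≤ gsl φ x :=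
      le_csSup hbdd ⟨y, ⟨hy.1, hlt⟩, rfl⟩
    have hxy : x - y ≠ 0 := by linarith
    have e1 : (φ x - φ y) / (x - y) * (y - x) = φ y - φ x := by
      field_simp; ring
    have := mul_le_mul_of_nonpos_right hs (by linarith : y - x ≤ 0)
    linarith
  · subst heq; simp
  · have hg : gsl φ x ≤ (φ y - φ x) / (y - x) := by
      refine csSup_le hne ?_
      rintro _ ⟨z, hz, rfl⟩
      exact hφ.slope_mono_adjacent ⟨hz.1, hz.2.le.trans hx.2.le⟩ hy hz.2 hgt
    have hxy : y - x ≠ 0 := by linarith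
    have e1 : (φ y - φ x) / (y - x) * (y - x) = φ y - φ x := by
      field_simp
    have := mul_le_mul_of_nonneg_right hg (by linarith : (0:ℝ) ≤ y - x)
    linarith

lemma gsl_mono {φ : ℝ → ℝ} (hφ : ConvexOn ℝ (Set.Icc (0:ℝ) 1) φ)
    {x z : ℝ} (hx : x ∈ Set.Ioo (0:ℝ) 1) (hz : z ∈ Set.Ioo (0:ℝ) 1) (hxz : x ≤ z) :
    gsl φ x ≤ gsl φ z := by
  rcases eq_or_lt_of_le hxz with rfl | hlt
  · exact le_rfl
  · have h1 := gsl_subgrad hφ hx ⟨hz.1.le, hz.2.le⟩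
    have h2 := gsl_subgrad hφ hz ⟨hx.1.le, hx.2.le⟩
    nlinarith [sub_pos.mpr hlt]

lemma gsl_mul_self {φ : ℝ → ℝ} (hφ : ConvexOn ℝ (Set.Icc (0:ℝ) 1) φ) (hφ0 : φ 0 = 0)
    {x : ℝ} (hx : x ∈ Set.Ioo (0:ℝ) 1) : φ x ≤ gsl φ x * x := by
  have := gsl_subgrad hφ hx ⟨le_rfl, zero_le_one⟩
  rw [hφ0] at this
  nlinarith

/-- Abel-summation bound: if `d` is antitone and all partial sums of `e` are nonnegative,
then `∑_{i<n+1} d i * e i ≥ d n * ∑_{i<n+1} e i`. -/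
lemma abel_bound (d e : ℕ → ℝ) (hd : ∀ ⦃i j : ℕ⦄, i ≤ j → d j ≤ d i)
    (hE : ∀ k, 0 ≤ ∑ i ∈ Finset.range k, e i) :
    ∀ n : ℕ, d n * ∑ i ∈ Finset.range (n+1), e i ≤ ∑ i ∈ Finset.range (n+1), d i * e i := by
  intro n
  induction n with
  | zero => simp
  | succ n ih =>
      rw [Finset.sum_range_succ (f := e), Finset.sum_range_succ (f := fun i => d i * e i)]
      have h1 : d (n+1) * ∑ i ∈ Finset.range (n+1), e i ≤
          d n * ∑ i ∈ Finset.range (n+1), e i :=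
        mul_le_mul_of_nonneg_right (hd (Nat.le_succ n)) (hE (n+1))
      nlinarith [ih]

/-- Infinite-dimensional Schur-convexity: if `q` (nonincreasing, nonnegative, summable,
entries in `[0,1]`) is majorized by `p`, then for every function `φ` convex on `[0,1]` with
`φ 0 = 0` (assuming `φ ∘ p` and `φ ∘ q` summable), `∑' i, φ (q i) ≤ ∑' i, φ (p i)`. -/
theorem tsum_convex_le_of_majorized
    (p q : ℕ → ℝ) (φ : ℝ → ℝ)
    (hp : ∀ i, p i ∈ Set.Icc (0 : ℝ) 1)
    (hq : ∀ i, q i ∈ Set.Icc (0 : ℝ) 1)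
    (hpa : Antitone p) (hqa : Antitone q)
    (hps : Summable p) (hqs : Summable q)
    (hmaj : ∀ k, ∑ i ∈ Finset.range k, q i ≤ ∑ i ∈ Finset.range k, p i)
    (htot : ∑' i, q i = ∑' i, p i)
    (hφ : ConvexOn ℝ (Set.Icc (0 : ℝ) 1) φ) (hφ0 : φ 0 = 0)
    (hsp : Summable (fun i => φ (p i))) (hsq : Summable (fun i => φ (q i))) :
    ∑' i, φ (q i) ≤ ∑' i, φ (p i) := by
  have hm : ∃ n, q n < 1 :=
    (hqs.tendsto_atTop_zero.eventually_lt_const zero_lt_one).exists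
  obtain ⟨m, hqm, hqbig⟩ : ∃ m, q m < 1 ∧ ∀ i < m, ¬ q i < 1 :=
    ⟨Nat.find hm, Nat.find_spec hm, fun i hi => Nat.find_min hm hi⟩
  have hq1 : ∀ i < m, q i = 1 := fun i hi =>
    le_antisymm (hq i).2 (not_lt.mp (hqbig i hi))
  have hp1 : ∀ i < m, p i = 1 := by
    have hsq1 : ∑ i ∈ Finset.range m, q i = m := by
      rw [Finset.sum_congr rfl (fun i hi => hq1 i (Finset.mem_range.mp hi))]
      simp
    intro j hj
    by_contra hne
    have hlt : p j < 1 := lt_of_le_of_ne (hp j).2 hne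
    have hlt2 : ∑ i ∈ Finset.range m, p i < ∑ i ∈ Finset.range m, (1:ℝ) :=
      Finset.sum_lt_sum (fun i _ => (hp i).2) ⟨j, Finset.mem_range.mpr hj, hlt⟩
    have hmm := hmaj m
    rw [hsq1] at hmm
    simp only [Finset.sum_const, Finset.card_range, nsmul_eq_mul, mul_one] at hlt2
    linarith
  have hqlt1 : ∀ i, m ≤ i → q i < 1 := fun i hi => lt_of_le_of_lt (hqa hi) hqm
  have hE : ∀ k, 0 ≤ ∑ i ∈ Finset.range k, (p i - q i) := by
    intro k; rw [Finset.sum_sub_distrib]; linarith [hmaj k]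
  by_cases h0 : ∃ n, q n = 0
  · -- Case A : q eventually 0, finite problem
    obtain ⟨N, hqN, hqmin⟩ : ∃ N, q N = 0 ∧ ∀ i < N, ¬ q i = 0 :=
      ⟨Nat.find h0, Nat.find_spec h0, fun i hi => Nat.find_min h0 hi⟩
    have hqpos : ∀ i, i < N → 0 < q i := fun i hi =>
      lt_of_le_of_ne (hq i).1 (Ne.symm (hqmin i hi))
    have hqzero : ∀ i, N ≤ i → q i = 0 := fun i hi =>
      le_antisymm (hqN ▸ hqa hi) (hq i).1
    have htq : ∑' i, q i = ∑ i ∈ Finset.range N, q i :=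
      tsum_eq_sum (fun i hi => hqzero i (le_of_not_gt (by simpa using hi)))
    have hSp_le : ∑ i ∈ Finset.range N, p i ≤ ∑' i, p i :=
      Summable.sum_le_tsum _ (fun i _ => (hp i).1) hps
    have hSeq : ∑ i ∈ Finset.range N, p i = ∑ i ∈ Finset.range N, q i := by
      rw [← htot, htq] at hSp_le
      exact le_antisymm hSp_le (hmaj N)
    have htailp : ∑' i, p (i + N) = 0 := by
      have h := Summable.sum_add_tsum_nat_add N hps
      have h2 : ∑' i, p i = ∑ i ∈ Finset.range N, p i := by
        rw [← htot, htq, hSeq]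
      linarith
    have hpzero : ∀ i, N ≤ i → p i = 0 := by
      intro i hi
      obtain ⟨j, rfl⟩ := Nat.exists_eq_add_of_le hi
      have hle : p (j + N) ≤ ∑' k, p (k + N) :=
        Summable.le_tsum ((summable_nat_add_iff (f := p) N).mpr hps) j (fun k _ => (hp (k+N)).1)
      rw [htailp] at hle
      have h0' := (hp (N + j)).1
      rw [Nat.add_comm j N] at hle
      linarith
    have hgq : ∑' i, φ (q i) = ∑ i ∈ Finset.range N, φ (q i) :=
      tsum_eq_sum (fun i hi => by
        rw [hqzero i (le_of_not_gt (by simpa using hi))]; exact hφ0)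
    have hgp : ∑' i, φ (p i) = ∑ i ∈ Finset.range N, φ (p i) :=
      tsum_eq_sum (fun i hi => by
        rw [hpzero i (le_of_not_gt (by simpa using hi))]; exact hφ0)
    rw [hgq, hgp]
    rcases le_or_gt N m with hNm | hmN
    · refine le_of_eq (Finset.sum_congr rfl (fun i hi => ?_))
      have hi' : i < m := lt_of_lt_of_le (Finset.mem_range.mp hi) hNm
      rw [hq1 i hi', hp1 i hi']
    · -- m < N : Abel summation over range N
      set d : ℕ → ℝ := fun i => gsl φ (q (min (max i m) (N - 1))) with hd_def
      have hidx : ∀ i : ℕ, q (min (max i m) (N-1)) ∈ Set.Ioo (0:ℝ) 1 := by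
        intro i
        have h1 : m ≤ min (max i m) (N-1) := le_min (le_max_right i m) (by omega)
        have h2 : min (max i m) (N-1) < N := by omega
        exact ⟨hqpos _ h2, hqlt1 _ h1⟩
      have hdant : ∀ ⦃i j : ℕ⦄, i ≤ j → d j ≤ d i := by
        intro i j hij
        exact gsl_mono hφ (hidx j) (hidx i) (hqa (by omega))
      have hper : ∀ i, i < N → d i * (p i - q i) ≤ φ (p i) - φ (q i) := by
        intro i hi
        rcases lt_or_ge i m with him | hmi
        · rw [hq1 i him, hp1 i him]; simp
        · have hii : min (max i m) (N-1) = i := by omega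
          have hsub := gsl_subgrad hφ (hidx i) (hp i)
          rw [hii] at hsub
          simp only [hd_def, hii]
          linarith
      have habel := abel_bound d (fun i => p i - q i) hdant hE (N - 1)
      have hNr : N - 1 + 1 = N := by omega
      rw [hNr] at habel
      have hzero : ∑ i ∈ Finset.range N, (p i - q i) = 0 := by
        rw [Finset.sum_sub_distrib, hSeq]; ring
      have hsum2 : ∑ i ∈ Finset.range N, d i * (p i - q i) ≤
          ∑ i ∈ Finset.range N, (φ (p i) - φ (q i)) :=
        Finset.sum_le_sum (fun i hi => hper i (Finset.mem_range.mp hi))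
      rw [hzero, mul_zero] at habel
      have hfin : 0 ≤ ∑ i ∈ Finset.range N, (φ (p i) - φ (q i)) :=
        le_trans habel hsum2
      rw [Finset.sum_sub_distrib] at hfin
      linarith
  · -- Case B : q always positive
    have hqpos : ∀ n, 0 < q n := fun n =>
      lt_of_le_of_ne (hq n).1 (fun h => h0 ⟨n, h.symm⟩)
    set d : ℕ → ℝ := fun i => gsl φ (q (max i m)) with hd_def
    have hIoo : ∀ i : ℕ, q (max i m) ∈ Set.Ioo (0:ℝ) 1 :=
      fun i => ⟨hqpos _, hqlt1 _ (le_max_right i m)⟩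
    have hdant : ∀ ⦃i j : ℕ⦄, i ≤ j → d j ≤ d i := by
      intro i j hij
      exact gsl_mono hφ (hIoo j) (hIoo i) (hqa (by omega))
    have hper : ∀ i, d i * (p i - q i) ≤ φ (p i) - φ (q i) := by
      intro i
      rcases lt_or_ge i m with him | hmi
      · rw [hq1 i him, hp1 i him]; simp
      · have hii : max i m = i := max_eq_left hmi
        have hsub := gsl_subgrad hφ (hii ▸ hIoo i) (hp i)
        simp only [hd_def, hii]
        linarith
    have key : ∀ n, m ≤ n →
        min 0 (∑' k, φ (q (k + (n+1)))) ≤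
          ∑ i ∈ Finset.range (n+1), (φ (p i) - φ (q i)) := by
      intro n hn
      have habel := abel_bound d (fun i => p i - q i) hdant hE n
      have hsum2 : ∑ i ∈ Finset.range (n+1), d i * (p i - q i) ≤
          ∑ i ∈ Finset.range (n+1), (φ (p i) - φ (q i)) :=
        Finset.sum_le_sum (fun i _ => hper i)
      have hmaxn : max n m = n := max_eq_left hn
      set E := ∑ i ∈ Finset.range (n+1), (p i - q i) with hE_def
      have hEnn : 0 ≤ E := hE (n+1)
      rcases le_or_gt 0 (d n) with hdn | hdn
      · have h1 : (0:ℝ) ≤ d n * E := mul_nonneg hdn hEnn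
        have h2 : min 0 (∑' k, φ (q (k + (n+1)))) ≤ 0 := min_le_left _ _
        linarith
      · have hEle : E ≤ ∑' k, q (k + (n+1)) := by
          have h1 := Summable.sum_add_tsum_nat_add (n+1) hps
          have h2 := Summable.sum_add_tsum_nat_add (n+1) hqs
          have h3 : (0:ℝ) ≤ ∑' k, p (k + (n+1)) := tsum_nonneg (fun k => (hp _).1)
          rw [hE_def, Finset.sum_sub_distrib]
          linarith
        have hmul1 : d n * ∑' k, q (k + (n+1)) ≤ d n * E :=
          mul_le_mul_of_nonpos_left hEle hdn.le
        have hterm : ∀ k, φ (q (k + (n+1))) ≤ d n * q (k + (n+1)) := by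
          intro k
          have hk : q (k + (n+1)) ∈ Set.Ioo (0:ℝ) 1 :=
            ⟨hqpos _, hqlt1 _ (by omega)⟩
          have h1 : φ (q (k+(n+1))) ≤ gsl φ (q (k+(n+1))) * q (k+(n+1)) :=
            gsl_mul_self hφ hφ0 hk
          have h2 : gsl φ (q (k+(n+1))) ≤ d n := by
            simp only [hd_def, hmaxn]
            exact gsl_mono hφ hk (hmaxn ▸ hIoo n) (hqa (by omega))
          nlinarith [(hqpos (k+(n+1))).le]
        have hsumφ : Summable (fun k => φ (q (k + (n+1)))) :=
          (summable_nat_add_iff (f := fun i => φ (q i)) (n+1)).mpr hsq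
        have hsumdq : Summable (fun k => d n * q (k + (n+1))) :=
          ((summable_nat_add_iff (f := q) (n+1)).mpr hqs).mul_left _
        have hmul2 : ∑' k, φ (q (k + (n+1))) ≤ d n * ∑' k, q (k + (n+1)) := by
          rw [← tsum_mul_left]
          exact Summable.tsum_le_tsum hterm hsumφ hsumdq
        calc min 0 (∑' k, φ (q (k + (n+1)))) ≤ ∑' k, φ (q (k + (n+1))) :=
              min_le_right _ _
          _ ≤ d n * ∑' k, q (k + (n+1)) := hmul2
          _ ≤ d n * E := hmul1
          _ ≤ ∑ i ∈ Finset.range (n+1), d i * (p i - q i) := habel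
          _ ≤ ∑ i ∈ Finset.range (n+1), (φ (p i) - φ (q i)) := hsum2
    have hten : Filter.Tendsto (fun n => ∑ i ∈ Finset.range n, (φ (p i) - φ (q i)))
        Filter.atTop (nhds ((∑' i, φ (p i)) - ∑' i, φ (q i))) :=
      (hsp.hasSum.sub hsq.hasSum).tendsto_sum_nat
    have htail0 : Filter.Tendsto (fun n : ℕ => ∑' k, φ (q (k + n)))
        Filter.atTop (nhds 0) := tendsto_sum_nat_add (fun i => φ (q i))
    have hmin : Filter.Tendsto (fun n : ℕ => min 0 (∑' k, φ (q (k + n))))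
        Filter.atTop (nhds 0) := by
      have := (tendsto_const_nhds (x := (0:ℝ)) (f := Filter.atTop (α := ℕ))).min htail0
      simpa using this
    have hev : ∀ᶠ n in Filter.atTop,
        min 0 (∑' k, φ (q (k + n))) ≤ ∑ i ∈ Finset.range n, (φ (p i) - φ (q i)) := by
      filter_upwards [Filter.eventually_ge_atTop (m+1)] with n hn
      obtain ⟨t, rfl⟩ : ∃ t, n = t + 1 := ⟨n - 1, by omega⟩
      exact key t (by omega)
    have hfinal := le_of_tendsto_of_tendsto hmin hten hev
    linarith
end

section
/- Let p, q : ℕ → ℝ be nonincreasing nonnegative summable sequences with entries in [0,1] such that q is majorized by p, i.e., ∑_{i=1}^{k} q i ≤ ∑_{i=1}^{k} p i for all k ∈ ℕ and ∑_{i∈ℕ} q i = ∑_{i∈ℕ} p i. Then for every concave function φ : ℝ → ℝ on [0,1] with φ(0) = 0, assuming φ ∘ p and φ ∘ q are summable, ∑_{i∈ℕ} φ(q i) ≥ ∑_{i∈ℕ} φ(p i). -/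
/-!
Write `xᵢ = pᵢ - qᵢ` and let `σᵢ` be the slope of `φ` between `qᵢ` and `pᵢ`, so that
`φ(pᵢ) - φ(qᵢ) = σᵢ xᵢ`, and the partial sums `Sₖ = ∑_{i<k} xᵢ` are nonnegative by majorization.
Since both sequences decrease, the chord of every later pair lies to the left of the chord of an
earlier pair with `qⱼ < pⱼ`, so concavity gives `σⱼ ≤ σₖ`. An Abel-summation induction then bounds
`∑_{i<k} (φ(pᵢ) - φ(qᵢ))` by `σⱼ Sₖ` for the last such `j < k`. By the equality of the totals,
`Sₖ` is at most the tail `∑_{i≥k} qᵢ`, and since `φ(0) = 0` concavity gives `σⱼ qᵢ ≤ φ(qᵢ)` for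
`i ≥ j`; so the partial differences are bounded by `max 0 (∑_{i≥k} φ(qᵢ))`, which tends to `0`.
-/

open Finset Filter Topology

section Slope

variable {𝕜 : Type*} [Field 𝕜] [LinearOrder 𝕜] [IsStrictOrderedRing 𝕜] {s : Set 𝕜} {φ : 𝕜 → 𝕜}

theorem ConcaveOn.slope_le_slope_of_le (hφ : ConcaveOn 𝕜 s φ) {a b c d : 𝕜}
    (ha : a ∈ s) (hb : b ∈ s) (hc : c ∈ s) (hd : d ∈ s)
    (hab : a < b) (hcd : c < d) (hac : a ≤ c) (hbd : b ≤ d) :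
    slope φ c d ≤ slope φ a b := calc
  slope φ c d = slope φ d c := slope_comm φ c d
  _ ≤ slope φ d a := hφ.slope_anti hd ⟨ha, (hac.trans_lt hcd).ne⟩ ⟨hc, hcd.ne⟩ hac
  _ = slope φ a d := slope_comm φ d a
  _ ≤ slope φ a b := hφ.slope_anti ha ⟨hb, hab.ne'⟩ ⟨hd, (hab.trans_le hbd).ne'⟩ hbd

theorem ConcaveOn.slope_mul_le (hφ : ConcaveOn 𝕜 s φ) (h0 : 0 ∈ s) (hφ0 : φ 0 = 0)
    {a b x : 𝕜} (ha : a ∈ s) (hb : b ∈ s) (hx : x ∈ s)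
    (ha0 : 0 ≤ a) (hab : a < b) (hx0 : 0 ≤ x) (hxb : x ≤ b) :
    slope φ a b * x ≤ φ x := by
  rcases hx0.eq_or_lt with rfl | hx0
  · simp [hφ0]
  have hslope : slope φ a b ≤ slope φ 0 x := hφ.slope_le_slope_of_le h0 hx ha hb hx0 hab ha0 hxb
  rw [slope_def_field φ 0 x, hφ0, sub_zero, sub_zero] at hslope
  simpa [hx0.ne'] using mul_le_mul_of_nonneg_right hslope hx0.le

end Slope

theorem exists_sum_range_mul_le_mul_sum_range {R : Type*} [CommRing R] [LinearOrder R]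
    [IsStrictOrderedRing R] {x σ : ℕ → R} (hS : ∀ k, 0 ≤ ∑ i ∈ range k, x i)
    (hσ : ∀ i k, i < k → 0 < x i → x k ≠ 0 → σ i ≤ σ k) (k : ℕ) :
    (∀ i < k, x i = 0) ∨
      ∃ j < k, 0 < x j ∧ ∑ i ∈ range k, σ i * x i ≤ σ j * ∑ i ∈ range k, x i := by
  induction k with
  | zero => exact Or.inl fun i hi => absurd hi (Nat.not_lt_zero i)
  | succ k ih =>
    have hSk := hS (k + 1)
    rw [sum_range_succ, sum_range_succ]
    rw [sum_range_succ] at hSk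
    rcases lt_trichotomy (x k) 0 with hneg | hzero | hpos
    · rcases ih with hall | ⟨j, hjk, hxj, hj⟩
      · rw [sum_eq_zero fun i hi => hall i (mem_range.mp hi)] at hSk
        exact absurd hneg (by simpa using hSk)
      · refine Or.inr ⟨j, by omega, hxj, ?_⟩
        have := mul_le_mul_of_nonpos_right (hσ j k hjk hxj hneg.ne) hneg.le
        linarith [mul_add (σ j) (∑ i ∈ range k, x i) (x k)]
    · rcases ih with hall | ⟨j, hjk, hxj, hj⟩
      · exact Or.inl fun i hi => (Nat.lt_succ_iff_lt_or_eq.mp hi).elim (hall i) (· ▸ hzero)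
      · exact Or.inr ⟨j, by omega, hxj, by simpa [hzero] using hj⟩
    · refine Or.inr ⟨k, k.lt_succ_self, hpos, ?_⟩
      rw [mul_add]
      gcongr
      rcases ih with hall | ⟨j, hjk, hxj, hj⟩
      · rw [sum_eq_zero fun i hi => by rw [hall i (mem_range.mp hi), mul_zero],
          sum_eq_zero fun i hi => hall i (mem_range.mp hi), mul_zero]
      · exact hj.trans (mul_le_mul_of_nonneg_right (hσ j k hjk hxj hpos.ne') (hS k))

theorem sum_range_sub_le_tsum_nat_add {p q : ℕ → ℝ} (hp : ∀ i, 0 ≤ p i)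
    (hps : Summable p) (hqs : Summable q) (htot : ∑' i, q i = ∑' i, p i) (k : ℕ) :
    ∑ i ∈ range k, (p i - q i) ≤ ∑' i, q (i + k) := by
  have hpk := hps.sum_add_tsum_nat_add k
  have hqk := hqs.sum_add_tsum_nat_add k
  have hptail : 0 ≤ ∑' i, p (i + k) := tsum_nonneg fun i => hp (i + k)
  rw [sum_sub_distrib]
  linarith

section Majorization

variable {p q : ℕ → ℝ} {φ : ℝ → ℝ}

theorem slope_le_slope_of_antitone (hp : ∀ i, p i ∈ Set.Icc (0 : ℝ) 1)
    (hq : ∀ i, q i ∈ Set.Icc (0 : ℝ) 1) (hpa : Antitone p) (hqa : Antitone q)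
    (hφ : ConcaveOn ℝ (Set.Icc (0 : ℝ) 1) φ) {j k : ℕ} (hjk : j < k) (hj : q j < p j)
    (hk : p k ≠ q k) : slope φ (q j) (p j) ≤ slope φ (q k) (p k) := by
  rcases hk.lt_or_gt with hk | hk
  · rw [slope_comm φ (q k)]
    exact hφ.slope_le_slope_of_le (hp k) (hq k) (hq j) (hp j) hk hj
      (hk.le.trans (hqa hjk.le)) ((hqa hjk.le).trans hj.le)
  · exact hφ.slope_le_slope_of_le (hq k) (hp k) (hq j) (hp j) hk hj (hqa hjk.le) (hpa hjk.le)

theorem sum_range_sub_le_max_tsum_nat_add (hp : ∀ i, p i ∈ Set.Icc (0 : ℝ) 1)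
    (hq : ∀ i, q i ∈ Set.Icc (0 : ℝ) 1) (hpa : Antitone p) (hqa : Antitone q)
    (hps : Summable p) (hqs : Summable q)
    (hmaj : ∀ k, ∑ i ∈ range k, q i ≤ ∑ i ∈ range k, p i) (htot : ∑' i, q i = ∑' i, p i)
    (hφ : ConcaveOn ℝ (Set.Icc (0 : ℝ) 1) φ) (hφ0 : φ 0 = 0)
    (hsq : Summable (fun i => φ (q i))) (k : ℕ) :
    ∑ i ∈ range k, (φ (p i) - φ (q i)) ≤ max 0 (∑' i, φ (q (i + k))) := by
  have hterm : ∀ i, φ (p i) - φ (q i) = slope φ (q i) (p i) * (p i - q i) := fun i => by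
    rw [mul_comm, ← smul_eq_mul, sub_smul_slope, vsub_eq_sub]
  simp_rw [hterm]
  have hS : ∀ k, 0 ≤ ∑ i ∈ range k, (p i - q i) := fun k => by
    simpa [sum_sub_distrib] using hmaj k
  rcases exists_sum_range_mul_le_mul_sum_range hS
      (fun i k hik hi hk => slope_le_slope_of_antitone hp hq hpa hqa hφ hik
        (sub_pos.mp hi) (sub_ne_zero.mp hk)) k with hall | ⟨j, hjk, hj, hbound⟩
  · rw [sum_eq_zero fun i hi => by rw [hall i (mem_range.mp hi), mul_zero]]
    exact le_max_left _ _
  set c := slope φ (q j) (p j)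
  refine hbound.trans ?_
  rcases le_or_gt c 0 with hc | hc
  · exact (mul_nonpos_of_nonpos_of_nonneg hc (hS k)).trans (le_max_left _ _)
  have hchord : ∀ i, c * q (i + k) ≤ φ (q (i + k)) := fun i =>
    hφ.slope_mul_le ⟨le_rfl, zero_le_one⟩ hφ0 (hq j) (hp j) (hq _) (hq j).1 (sub_pos.mp hj)
      (hq _).1 ((hqa (by omega)).trans (sub_pos.mp hj).le)
  refine le_max_of_le_right ?_
  calc c * ∑ i ∈ range k, (p i - q i)
      ≤ c * ∑' i, q (i + k) :=
        mul_le_mul_of_nonneg_left (sum_range_sub_le_tsum_nat_add (fun i => (hp i).1) hps hqs htot k)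
          hc.le
    _ = ∑' i, c * q (i + k) := tsum_mul_left.symm
    _ ≤ ∑' i, φ (q (i + k)) :=
        ((summable_nat_add_iff k).mpr hqs).mul_left c |>.tsum_le_tsum hchord
          ((summable_nat_add_iff k).mpr hsq)

end Majorization

/-- Infinite-dimensional Schur-concavity: if `q` (nonincreasing, nonnegative, summable,
entries in `[0,1]`) is majorized by `p`, then for every function `φ` concave on `[0,1]` with
`φ 0 = 0` (assuming `φ ∘ p` and `φ ∘ q` summable), `∑' i, φ (q i) ≥ ∑' i, φ (p i)`. -/
theorem tsum_concave_ge_of_majorized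
    (p q : ℕ → ℝ) (φ : ℝ → ℝ)
    (hp : ∀ i, p i ∈ Set.Icc (0 : ℝ) 1)
    (hq : ∀ i, q i ∈ Set.Icc (0 : ℝ) 1)
    (hpa : Antitone p) (hqa : Antitone q)
    (hps : Summable p) (hqs : Summable q)
    (hmaj : ∀ k, ∑ i ∈ Finset.range k, q i ≤ ∑ i ∈ Finset.range k, p i)
    (htot : ∑' i, q i = ∑' i, p i)
    (hφ : ConcaveOn ℝ (Set.Icc (0 : ℝ) 1) φ) (hφ0 : φ 0 = 0)
    (hsp : Summable (fun i => φ (p i))) (hsq : Summable (fun i => φ (q i))) :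
    ∑' i, φ (p i) ≤ ∑' i, φ (q i) := by
  have hpartial : Tendsto (fun k => ∑ i ∈ range k, (φ (p i) - φ (q i))) atTop
      (𝓝 (∑' i, φ (p i) - ∑' i, φ (q i))) := by
    rw [← hsp.tsum_sub hsq]
    exact (hsp.sub hsq).hasSum.tendsto_sum_nat
  have htail : Tendsto (fun k => max 0 (∑' i, φ (q (i + k)))) atTop (𝓝 0) := by
    simpa using (tendsto_const_nhds (x := (0 : ℝ))).max (tendsto_sum_nat_add fun i => φ (q i))
  have := le_of_tendsto_of_tendsto' hpartial htail
    (sum_range_sub_le_max_tsum_nat_add hp hq hpa hqa hps hqs hmaj htot hφ hφ0 hsq)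
  linarith
end

section
/- Let ρ be a density operator (a positive, trace-class operator of trace one) on a separable complex Hilbert space H, with eigenvalue sequence λ = {λ n}_{n∈ℕ} sorted in decreasing order and counted with multiplicity, and let {e n}_{n∈ℕ} be an orthonormal basis of H. Let p denote the decreasing rearrangement of the diagonal sequence {⟨e n, ρ e n⟩}_{n∈ℕ}. Then for every convex function φ : [0,1] → ℝ with φ(0) = 0 and every strictly decreasing h : ℝ → ℝ, assuming φ ∘ λ and φ ∘ p are summable, h(∑_{n∈ℕ} φ(λ n)) ≤ h(∑_{n∈ℕ} φ(p n)); that is, 𝐇_{(h,φ)}(ρ) ≤ H_{(h,φ)}(p). -/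
/-!
Write `b m n = ‖⟪v m, e n⟫‖²`. The spectral decomposition gives `⟪e n, ρ e n⟫ = ∑ₘ b m n λₘ`;
by Parseval every row of `b` sums to `1`, and by Bessel every column sums to at most `1`.
Jensen's inequality, with the missing mass of a column placed at `0` where `φ` vanishes, gives
`φ (⟪e n, ρ e n⟫) ≤ ∑ₘ b m n φ (λₘ)`; summing over `n` and exchanging the sums yields
`∑ φ (p n) ≤ ∑ φ (λ m)`, which `h` reverses.
-/

open scoped InnerProductSpace
open Set

namespace ConvexOn

variable {S : Set ℝ} {f : ℝ → ℝ} {x y : ℝ}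

theorem add_rightDeriv_mul_sub_le_s6 (hf : ConvexOn ℝ S f) (hx : x ∈ interior S) (hy : y ∈ S) :
    f x + derivWithin f (Ioi x) x * (y - x) ≤ f y := by
  rcases lt_trichotomy y x with hyx | rfl | hxy
  · have h := (hf.slope_le_leftDeriv_of_mem_interior hy hx hyx).trans
      (hf.leftDeriv_le_rightDeriv_of_mem_interior hx)
    rw [slope_def_field, div_le_iff₀ (sub_pos.2 hyx)] at h
    linarith
  · simp
  · have h := hf.rightDeriv_le_slope_of_mem_interior hx hy hxy
    rw [slope_def_field, le_div_iff₀ (sub_pos.2 hxy)] at h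
    linarith

theorem map_le_tsum_mul_of_hasSum_le_one {ι : Type*} (hf : ConvexOn ℝ (Icc 0 1) f)
    (hf0 : f 0 = 0) {w x : ι → ℝ} {W t : ℝ} (hw0 : ∀ i, 0 ≤ w i) (hw : HasSum w W) (hW : W ≤ 1)
    (hx : ∀ i, x i ∈ Icc 0 1) (hwx : HasSum (fun i => w i * x i) t)
    (hwf : Summable fun i => w i * f (x i)) :
    f t ≤ ∑' i, w i * f (x i) := by
  have hwx0 : ∀ i, 0 ≤ w i * x i := fun i => mul_nonneg (hw0 i) (hx i).1
  have htW : t ≤ W := hasSum_le (fun i => mul_le_of_le_one_right (hw0 i) (hx i).2) hwx hw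
  -- `f` may jump at `0` and `1`, where it has no supporting line, but a barycentre at an
  -- endpoint forces all the weight onto that endpoint.
  rcases (hwx.nonneg hwx0).eq_or_lt with rfl | ht0
  · have hzero : ∀ i, w i * f (x i) = 0 := fun i => by
      rcases mul_eq_zero.1 (congrFun ((hasSum_zero_iff_of_nonneg hwx0).1 hwx) i) with h | h
      · simp [h]
      · simp [h, hf0]
    simp [hzero, hf0]
  rcases (htW.trans hW).eq_or_lt with rfl | ht1
  · have hW1 : W = 1 := le_antisymm hW htW
    have hgap : HasSum (fun i => w i * (1 - x i)) 0 := by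
      simpa [mul_sub, hW1] using hw.sub hwx
    have hone : ∀ i, w i * f (x i) = w i * f 1 := fun i => by
      rcases mul_eq_zero.1 (congrFun ((hasSum_zero_iff_of_nonneg fun i =>
        mul_nonneg (hw0 i) (sub_nonneg.2 (hx i).2)).1 hgap) i) with h | h
      · simp [h]
      · rw [← sub_eq_zero.1 h]
    rw [tsum_congr hone, tsum_mul_right, hw.tsum_eq, hW1, one_mul]
  set s := derivWithin f (Ioi t) t
  have ht : t ∈ interior (Icc (0 : ℝ) 1) := by rw [interior_Icc]; exact ⟨ht0, ht1⟩
  have hsupp : ∀ y ∈ Icc (0 : ℝ) 1, f t + s * (y - t) ≤ f y := fun y hy =>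
    hf.add_rightDeriv_mul_sub_le_s6 ht hy
  have hft : f t - s * t ≤ 0 := by simpa [hf0] using hsupp 0 ⟨le_rfl, zero_le_one⟩
  have haff : HasSum (fun i => w i * (f t + s * (x i - t))) (W * (f t - s * t) + s * t) := by
    refine ((hw.mul_right (f t - s * t)).add (hwx.mul_left s)).congr_fun fun i => ?_
    ring
  calc f t ≤ W * (f t - s * t) + s * t := by nlinarith
    _ ≤ ∑' i, w i * f (x i) :=
      hasSum_le (fun i => mul_le_mul_of_nonneg_left (hsupp _ (hx i)) (hw0 i)) haff hwf.hasSum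

theorem tsum_le_tsum_of_substochastic {ι κ : Type*} (hf : ConvexOn ℝ (Icc 0 1) f)
    (hf0 : f 0 = 0) {b : ι → κ → ℝ} (hb0 : ∀ i j, 0 ≤ b i j) (hrow : ∀ i, HasSum (b i) 1)
    (hcol : ∀ j, Summable fun i => b i j) (hcol1 : ∀ j, ∑' i, b i j ≤ 1)
    {x : ι → ℝ} {y : κ → ℝ} (hx : ∀ i, x i ∈ Icc 0 1)
    (hy : ∀ j, HasSum (fun i => b i j * x i) (y j))
    (hfx : Summable fun i => f (x i)) (hfy : Summable fun j => f (y j)) :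
    ∑' j, f (y j) ≤ ∑' i, f (x i) := by
  set F : ι → κ → ℝ := fun i j => b i j * f (x i)
  have hF : Summable (Function.uncurry F) := by
    have habs : ∀ i j, |F i j| = b i j * |f (x i)| := fun i j => by
      rw [abs_mul, abs_of_nonneg (hb0 i j)]
    refine Summable.of_abs ?_
    rw [summable_prod_of_nonneg fun _ => abs_nonneg _]
    simp only [Function.uncurry_apply_pair, habs, ((hrow _).mul_right _).tsum_eq, one_mul]
    exact ⟨fun i => ((hrow i).mul_right _).summable, hfx.abs⟩
  have hjensen : ∀ j, f (y j) ≤ ∑' i, F i j := fun j =>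
    hf.map_le_tsum_mul_of_hasSum_le_one hf0 (hb0 · j) (hcol j).hasSum (hcol1 j) hx (hy j)
      (hF.prod_symm.prod_factor j)
  calc ∑' j, f (y j) ≤ ∑' j, ∑' i, F i j := hfy.tsum_le_tsum hjensen hF.prod_symm.prod
    _ = ∑' i, ∑' j, F i j := hF.tsum_comm
    _ = ∑' i, f (x i) := tsum_congr fun i => by
      simp only [F, tsum_mul_right, (hrow i).tsum_eq, one_mul]

end ConvexOn

section Hilbert

variable {ι H : Type*} [NormedAddCommGroup H] [InnerProductSpace ℂ H]

theorem HilbertBasis.hasSum_norm_inner_sq {𝕜 E : Type*} [RCLike 𝕜] [NormedAddCommGroup E]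
    [InnerProductSpace 𝕜 E] (b : HilbertBasis ι 𝕜 E) (x : E) :
    HasSum (fun i => ‖⟪b i, x⟫_𝕜‖ ^ 2) (‖x‖ ^ 2) := by
  simpa [b.repr_apply_apply] using lp.hasSum_norm (p := 2) (by norm_num) (b.repr x)

theorem Orthonormal.summable_smul_inner_smul [CompleteSpace H] {v : ι → H}
    (hv : Orthonormal ℂ v) {lam : ι → ℝ} {C : ℝ} (hC : ∀ i, |lam i| ≤ C) (x : H) :
    Summable fun i => lam i • (⟪v i, x⟫_ℂ • v i) := by
  have h := hv.orthogonalFamily.summable_iff_norm_sq_summable fun i => (lam i : ℂ) * ⟪v i, x⟫_ℂ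
  simp only [LinearIsometry.toSpanSingleton_apply, mul_smul, Complex.coe_smul] at h
  refine h.2 (((hv.inner_products_summable x).mul_left (C ^ 2)).of_nonneg_of_le
    (fun i => by positivity) fun i => ?_)
  rw [norm_mul, mul_pow, Complex.norm_real, Real.norm_eq_abs]
  gcongr
  exact hC i

theorem Orthonormal.hasSum_re_inner_tsum_smul [CompleteSpace H] {v : ι → H}
    (hv : Orthonormal ℂ v) {lam : ι → ℝ} {C : ℝ} (hC : ∀ i, |lam i| ≤ C) (x : H) :
    HasSum (fun i => ‖⟪v i, x⟫_ℂ‖ ^ 2 * lam i)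
      (⟪x, ∑' i, lam i • (⟪v i, x⟫_ℂ • v i)⟫_ℂ).re := by
  refine (((hv.summable_smul_inner_smul hC x).hasSum.mapL (innerSL ℂ x)).mapL
    Complex.reCLM).congr_fun fun i => ?_
  simp only [Complex.reCLM_apply, innerSL_apply_apply]
  rw [← Complex.coe_smul, inner_smul_right, inner_smul_right, ← inner_conj_symm x (v i),
    Complex.mul_conj, Complex.normSq_eq_norm_sq, ← Complex.ofReal_mul,
    Complex.ofReal_re, mul_comm]

end Hilbert

theorem quantum_entropy_le_diagonal_entropy_general
    {H : Type*} [NormedAddCommGroup H] [InnerProductSpace ℂ H] [CompleteSpace H]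
    (ρ : H →L[ℂ] H)
    (lam : ℕ → ℝ) (v : ℕ → H)
    (hlam0 : ∀ n, 0 ≤ lam n)
    (hlam_sum : Summable lam) (hlam1 : ∑' n, lam n = 1)
    (hv : Orthonormal ℂ v)
    (hspec : ∀ x, ρ x = ∑' n, lam n • (⟪v n, x⟫_ℂ • v n))
    (e : HilbertBasis ℕ ℂ H)
    (p : ℕ → ℝ) (σ : ℕ ≃ ℕ)
    (hpdiag : ∀ n, p n = (⟪e (σ n), ρ (e (σ n))⟫_ℂ).re)
    (φ h : ℝ → ℝ)
    (hφ : ConvexOn ℝ (Set.Icc (0 : ℝ) 1) φ) (hφ0 : φ 0 = 0)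
    (hh : StrictAnti h)
    (hsl : Summable (fun n => φ (lam n))) (hsp : Summable (fun n => φ (p n))) :
    h (∑' n, φ (lam n)) ≤ h (∑' n, φ (p n)) := by
  have hlam : ∀ n, lam n ∈ Icc 0 1 := fun n =>
    ⟨hlam0 n, hlam1 ▸ hlam_sum.le_tsum n fun k _ => hlam0 k⟩
  have hdiag : ∀ n, HasSum (fun m => ‖⟪v m, e (σ n)⟫_ℂ‖ ^ 2 * lam m) (p n) := fun n => by
    rw [hpdiag, hspec]
    exact hv.hasSum_re_inner_tsum_smul (fun m => (abs_of_nonneg (hlam0 m)).trans_le (hlam m).2) _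
  have hrow : ∀ m, HasSum (fun n => ‖⟪v m, e (σ n)⟫_ℂ‖ ^ 2) 1 := fun m => by
    have hparseval := e.hasSum_norm_inner_sq (v m)
    simp only [norm_inner_symm (e _), hv.1 m, one_pow] at hparseval
    exact σ.hasSum_iff.2 hparseval
  have hcol : ∀ n, ∑' m, ‖⟪v m, e (σ n)⟫_ℂ‖ ^ 2 ≤ 1 := fun n =>
    (hv.tsum_inner_products_le _).trans_eq (by rw [e.orthonormal.1, one_pow])
  exact hh.antitone (hφ.tsum_le_tsum_of_substochastic hφ0 (fun _ _ => by positivity) hrow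
    (fun n => hv.inner_products_summable _) hcol hlam hdiag hsl hsp)

/-- Let `ρ` be a density operator (positive, trace-class, trace one) on a separable complex
Hilbert space, with eigenvalue sequence `lam` sorted in decreasing order and counted with
multiplicity (encoded by the spectral decomposition `ρ x = ∑' n, lam n • ⟪v n, x⟫ • v n`
with `v` orthonormal, `lam` antitone, nonnegative, summable with sum one).  Let `e` be an
orthonormal basis and `p` the decreasing rearrangement of the diagonal `⟪e n, ρ (e n)⟫`.
Then for every `φ` convex on `[0,1]` with `φ 0 = 0` and every strictly decreasing `h`,
assuming `φ ∘ lam` and `φ ∘ p` summable, `h (∑' n, φ (lam n)) ≤ h (∑' n, φ (p n))`;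
that is, `𝐇_{(h,φ)}(ρ) ≤ H_{(h,φ)}(p)`. -/
theorem quantum_entropy_le_diagonal_entropy
    {H : Type*} [NormedAddCommGroup H] [InnerProductSpace ℂ H] [CompleteSpace H]
    (ρ : H →L[ℂ] H) (hpos : ρ.IsPositive)
    (lam : ℕ → ℝ) (v : ℕ → H)
    (hlam0 : ∀ n, 0 ≤ lam n) (hlam_anti : Antitone lam)
    (hlam_sum : Summable lam) (hlam1 : ∑' n, lam n = 1)
    (hv : Orthonormal ℂ v)
    (hspec : ∀ x, ρ x = ∑' n, lam n • (⟪v n, x⟫_ℂ • v n))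
    (e : HilbertBasis ℕ ℂ H)
    (p : ℕ → ℝ) (σ : ℕ ≃ ℕ)
    (hpdiag : ∀ n, p n = (⟪e (σ n), ρ (e (σ n))⟫_ℂ).re)
    (hpa : Antitone p)
    (φ h : ℝ → ℝ)
    (hφ : ConvexOn ℝ (Set.Icc (0 : ℝ) 1) φ) (hφ0 : φ 0 = 0)
    (hh : StrictAnti h)
    (hsl : Summable (fun n => φ (lam n))) (hsp : Summable (fun n => φ (p n))) :
    h (∑' n, φ (lam n)) ≤ h (∑' n, φ (p n)) :=
  quantum_entropy_le_diagonal_entropy_general ρ lam v hlam0 hlam_sum hlam1 hv hspec e p σ hpdiag φ h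
    hφ hφ0 hh hsl hsp
end
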